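/- arXiv:2201.09446 — 3 statements merged into one kernel-verified Lean document; each statement's English description precedes it below -/
import Mathlib

section
/- For every k ∈ ℤ₊, the function v_k(t) = e^{-t^{2n+2}/(2n+2)} L_k^{(-1/(2n+2))}(t^{2n+2}/(n+1)) satisfies the equation -v_k''(t) + t^{2(2n+1)} v_k(t) = E_k t^{2n} v_k(t) on ℝ with E_k = 4k(n+1) + 2n + 1, and the function w_k(t) = e^{-t^{2n+2}/(2n+2)} t L_k^{(1/(2n+2))}(t^{2n+2}/(n+1)) satisfies -w_k''(t) + t^{2(2n+1)} w_k(t) = Ẽ_k t^{2n} w_k(t) on ℝ with Ẽ_k = 4k(n+1) + 2n + 3. -/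
/-- Generalized binomial coefficient `binom(a, j) = a (a-1) ⋯ (a-j+1) / j!`. -/
noncomputable def genBinom (a : ℝ) (j : ℕ) : ℝ :=
  (∏ i ∈ Finset.range j, (a - i)) / (Nat.factorial j : ℝ)

/-- Generalized Laguerre polynomial
`L_k^{(a)}(s) = Σ_{i=0}^{k} (-1)^i binom(k+a, k-i) s^i / i!`. -/
noncomputable def laguerre (a : ℝ) (k : ℕ) (s : ℝ) : ℝ :=
  ∑ i ∈ Finset.range (k + 1),
    (-1 : ℝ) ^ i * genBinom ((k : ℝ) + a) (k - i) * s ^ i / (Nat.factorial i : ℝ)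

/-- The even-parity eigenfunction
`v_k(t) = e^{-t^{2n+2}/(2n+2)} L_k^{(-1/(2n+2))}(t^{2n+2}/(n+1))`. -/
noncomputable def vk (n k : ℕ) (t : ℝ) : ℝ :=
  Real.exp (-(t ^ (2 * n + 2)) / (2 * (n : ℝ) + 2)) *
    laguerre (-(1 / (2 * (n : ℝ) + 2))) k (t ^ (2 * n + 2) / ((n : ℝ) + 1))

/-- The odd-parity eigenfunction
`w_k(t) = e^{-t^{2n+2}/(2n+2)} t L_k^{(1/(2n+2))}(t^{2n+2}/(n+1))`. -/
noncomputable def wk (n k : ℕ) (t : ℝ) : ℝ :=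
  Real.exp (-(t ^ (2 * n + 2)) / (2 * (n : ℝ) + 2)) * t *
    laguerre (1 / (2 * (n : ℝ) + 2)) k (t ^ (2 * n + 2) / ((n : ℝ) + 1))

noncomputable def lagD (a : ℝ) (k : ℕ) (s : ℝ) : ℝ :=
  ∑ i ∈ Finset.range (k + 1),
    (-1 : ℝ) ^ i * genBinom ((k : ℝ) + a) (k - i) * ((i : ℝ) * s ^ (i - 1)) / (Nat.factorial i : ℝ)
noncomputable def lagD2 (a : ℝ) (k : ℕ) (s : ℝ) : ℝ :=
  ∑ i ∈ Finset.range (k + 1),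
    (-1 : ℝ) ^ i * genBinom ((k : ℝ) + a) (k - i) * ((i : ℝ) * (((i - 1 : ℕ) : ℝ) * s ^ (i - 1 - 1))) / (Nat.factorial i : ℝ)

lemma laguerre_hasDerivAt (a : ℝ) (k : ℕ) (s : ℝ) :
    HasDerivAt (laguerre a k) (lagD a k s) s := by
  unfold laguerre lagD
  apply HasDerivAt.fun_sum
  intro i _
  exact ((hasDerivAt_pow i s).const_mul ((-1 : ℝ) ^ i * genBinom ((k : ℝ) + a) (k - i))).div_const _

lemma lagD_hasDerivAt (a : ℝ) (k : ℕ) (s : ℝ) :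
    HasDerivAt (lagD a k) (lagD2 a k s) s := by
  unfold lagD lagD2
  apply HasDerivAt.fun_sum
  intro i _
  exact (((hasDerivAt_pow (i - 1) s).const_mul (i : ℝ)).const_mul
    ((-1 : ℝ) ^ i * genBinom ((k : ℝ) + a) (k - i))).div_const _

lemma sigma_hasDerivAt (n : ℕ) (t : ℝ) :
    HasDerivAt (fun t : ℝ => t ^ (2*n+2) / ((n:ℝ)+1)) (2 * t ^ (2*n+1)) t := by
  have h := (hasDerivAt_pow (2*n+2) t).div_const ((n:ℝ)+1)
  have e : 2*n+2-1 = 2*n+1 := by omega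
  rw [e] at h
  refine h.congr_deriv ?_
  have hne : ((n:ℝ)+1) ≠ 0 := by positivity
  push_cast
  rw [div_eq_iff hne]
  ring

lemma exp_hasDerivAt (n : ℕ) (t : ℝ) :
    HasDerivAt (fun t : ℝ => Real.exp (-(t ^ (2*n+2)) / (2*(n:ℝ)+2)))
      (Real.exp (-(t ^ (2*n+2)) / (2*(n:ℝ)+2)) * (-(t ^ (2*n+1)))) t := by
  have h := ((hasDerivAt_pow (2*n+2) t).neg.div_const (2*(n:ℝ)+2)).exp
  have e : 2*n+2-1 = 2*n+1 := by omega
  rw [e] at h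
  simp only [Pi.neg_apply] at h
  convert h using 2
  have hne : (2*(n:ℝ)+2) ≠ 0 := by positivity
  push_cast
  field_simp

noncomputable def V1 (n k : ℕ) (a : ℝ) (t : ℝ) : ℝ :=
  Real.exp (-(t ^ (2*n+2)) / (2*(n:ℝ)+2)) * (-(t ^ (2*n+1))) * laguerre a k (t^(2*n+2)/((n:ℝ)+1))
  + Real.exp (-(t ^ (2*n+2)) / (2*(n:ℝ)+2)) * (lagD a k (t^(2*n+2)/((n:ℝ)+1)) * (2 * t^(2*n+1)))

lemma v_hasDerivAt (n k : ℕ) (a : ℝ) (t : ℝ) :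
    HasDerivAt (fun t : ℝ => Real.exp (-(t ^ (2*n+2)) / (2*(n:ℝ)+2)) *
      laguerre a k (t^(2*n+2)/((n:ℝ)+1))) (V1 n k a t) t :=
  (exp_hasDerivAt n t).mul ((laguerre_hasDerivAt a k _).comp t (sigma_hasDerivAt n t))

lemma genBinom_step (x : ℝ) (j : ℕ) :
    genBinom x (j + 1) * ((j : ℝ) + 1) = genBinom x j * (x - j) := by
  unfold genBinom
  rw [Finset.prod_range_succ, Nat.factorial_succ]
  have h : (j : ℝ) + 1 ≠ 0 := by positivity
  have h2 : (Nat.factorial j : ℝ) ≠ 0 := Nat.cast_ne_zero.2 (Nat.factorial_ne_zero j)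
  push_cast
  field_simp

lemma laguerre_ode (a : ℝ) (k : ℕ) (s : ℝ) :
    s * lagD2 a k s + (a + 1 - s) * lagD a k s + (k : ℝ) * laguerre a k s = 0 := by
  unfold laguerre lagD lagD2
  rw [Finset.mul_sum, Finset.mul_sum, Finset.mul_sum, ← Finset.sum_add_distrib,
    ← Finset.sum_add_distrib]
  have step : ∀ i : ℕ,
      s * ((-1:ℝ)^i * genBinom ((k:ℝ)+a) (k-i) * ((i:ℝ) * (((i-1:ℕ):ℝ) * s^(i-1-1))) / (Nat.factorial i : ℝ))
      + (a+1-s) * ((-1:ℝ)^i * genBinom ((k:ℝ)+a) (k-i) * ((i:ℝ) * s^(i-1)) / (Nat.factorial i : ℝ))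
      + (k:ℝ) * ((-1:ℝ)^i * genBinom ((k:ℝ)+a) (k-i) * s^i / (Nat.factorial i : ℝ))
      = (-1:ℝ)^i * genBinom ((k:ℝ)+a) (k-i) / (Nat.factorial i : ℝ) * ((i:ℝ) * ((i:ℝ)+a)) * s^(i-1)
      + (-1:ℝ)^i * genBinom ((k:ℝ)+a) (k-i) / (Nat.factorial i : ℝ) * (((k:ℝ)-(i:ℝ)) * s^i) := by
    intro i
    match i with
    | 0 => simp; ring
    | 1 => norm_num; ring
    | (m+2) =>
      have e1 : m + 2 - 1 = m + 1 := rfl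
      have e2 : m + 1 - 1 = m := rfl
      rw [e1, e2]
      push_cast
      ring
  rw [Finset.sum_congr rfl (fun i _ => step i), Finset.sum_add_distrib]
  rw [Finset.sum_range_succ' (fun i => (-1:ℝ)^i * genBinom ((k:ℝ)+a) (k-i) / (Nat.factorial i : ℝ) * ((i:ℝ) * ((i:ℝ)+a)) * s^(i-1)) k]
  rw [Finset.sum_range_succ (fun i => (-1:ℝ)^i * genBinom ((k:ℝ)+a) (k-i) / (Nat.factorial i : ℝ) * (((k:ℝ)-(i:ℝ)) * s^i)) k]
  simp only [Nat.cast_zero, zero_mul, mul_zero, add_zero, sub_self, zero_add]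
  rw [← Finset.sum_add_distrib]
  apply Finset.sum_eq_zero
  intro i hi
  have hik : i < k := Finset.mem_range.mp hi
  have hstep := genBinom_step ((k:ℝ)+a) (k - i - 1)
  have e : k - i - 1 + 1 = k - i := by omega
  rw [e] at hstep
  have ec : ((k - i - 1 : ℕ) : ℝ) = (k:ℝ) - i - 1 := by
    rw [Nat.cast_sub (show 1 ≤ k - i by omega), Nat.cast_sub (show i ≤ k by omega)]
    simp
  rw [ec] at hstep
  have e2 : k - (i+1) = k - i - 1 := by omega
  rw [e2, Nat.factorial_succ]
  have hf : (Nat.factorial i : ℝ) ≠ 0 := Nat.cast_ne_zero.2 (Nat.factorial_ne_zero i)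
  have hi1 : ((i:ℝ) + 1) ≠ 0 := by positivity
  have key : genBinom ((k:ℝ)+a) (k-i) * ((k:ℝ)-(i:ℝ))
      = genBinom ((k:ℝ)+a) (k-i-1) * (a + i + 1) := by linear_combination hstep
  push_cast
  rw [pow_succ]
  field_simp
  linear_combination ((-1:ℝ)^i * s^i) * key

lemma part1 (n k : ℕ) (t : ℝ) :
      -(deriv (deriv (vk n k)) t) + t ^ (2 * (2 * n + 1)) * vk n k t =
        (4 * (k : ℝ) * ((n : ℝ) + 1) + 2 * (n : ℝ) + 1) * t ^ (2 * n) * vk n k t := by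
  have hd1 : deriv (vk n k) = V1 n k (-(1/(2*(n:ℝ)+2))) :=
    funext fun t => (v_hasDerivAt n k (-(1/(2*(n:ℝ)+2))) t).deriv
  have H2 : HasDerivAt (V1 n k (-(1/(2*(n:ℝ)+2)))) _ t :=
    (((exp_hasDerivAt n t).mul (hasDerivAt_pow (2*n+1) t).neg).mul
      ((laguerre_hasDerivAt (-(1/(2*(n:ℝ)+2))) k (t^(2*n+2)/((n:ℝ)+1))).comp t (sigma_hasDerivAt n t))).add
    ((exp_hasDerivAt n t).mul
      (((lagD_hasDerivAt (-(1/(2*(n:ℝ)+2))) k (t^(2*n+2)/((n:ℝ)+1))).comp t (sigma_hasDerivAt n t)).mul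
        ((hasDerivAt_pow (2*n+1) t).const_mul 2)))
  rw [hd1, H2.deriv]
  simp only [Function.comp_apply, Pi.mul_apply, Pi.neg_apply]
  unfold vk
  have hne : ((n:ℝ)+1) ≠ 0 := by positivity
  have hne2 : (2*(n:ℝ)+2) ≠ 0 := by positivity
  have ode := laguerre_ode (-(1/(2*(n:ℝ)+2))) k (t^(2*n+2)/((n:ℝ)+1))
  have h4 := congrArg (fun r => 4*((n:ℝ)+1) * r) ode
  simp only [mul_zero] at h4
  have e1 : 4*((n:ℝ)+1) * (t^(2*n+2)/((n:ℝ)+1)) = 4 * t^(2*n+2) := by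
    field_simp
  have e2m : 4*((n:ℝ)+1)*((-(1/(2*(n:ℝ)+2)))+1) = 4*(n:ℝ)+2 := by
    field_simp
    ring
  have ode2 : 4*t^(2*n+2) * lagD2 (-(1/(2*(n:ℝ)+2))) k (t^(2*n+2)/((n:ℝ)+1))
      + ((4*(n:ℝ)+2) - 4*t^(2*n+2)) * lagD (-(1/(2*(n:ℝ)+2))) k (t^(2*n+2)/((n:ℝ)+1))
      + (4*((n:ℝ)+1)*(k:ℝ)) * laguerre (-(1/(2*(n:ℝ)+2))) k (t^(2*n+2)/((n:ℝ)+1)) = 0 := by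
    linear_combination h4 - (lagD2 (-(1/(2*(n:ℝ)+2))) k (t^(2*n+2)/((n:ℝ)+1))
      - lagD (-(1/(2*(n:ℝ)+2))) k (t^(2*n+2)/((n:ℝ)+1))) * e1
      - lagD (-(1/(2*(n:ℝ)+2))) k (t^(2*n+2)/((n:ℝ)+1)) * e2m
  simp only [show 2*n+1-1 = 2*n from by omega]
  push_cast
  linear_combination (-(Real.exp (-(t ^ (2*n+2)) / (2*(n:ℝ)+2))) * t^(2*n)) * ode2

noncomputable def W1 (n k : ℕ) (a : ℝ) (t : ℝ) : ℝ :=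
  (Real.exp (-(t ^ (2*n+2)) / (2*(n:ℝ)+2)) * (-(t ^ (2*n+1))) * t
    + Real.exp (-(t ^ (2*n+2)) / (2*(n:ℝ)+2)) * 1) * laguerre a k (t^(2*n+2)/((n:ℝ)+1))
  + Real.exp (-(t ^ (2*n+2)) / (2*(n:ℝ)+2)) * t * (lagD a k (t^(2*n+2)/((n:ℝ)+1)) * (2 * t^(2*n+1)))

lemma w_hasDerivAt (n k : ℕ) (a : ℝ) (t : ℝ) :
    HasDerivAt (fun t : ℝ => Real.exp (-(t ^ (2*n+2)) / (2*(n:ℝ)+2)) * t *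
      laguerre a k (t^(2*n+2)/((n:ℝ)+1))) (W1 n k a t) t :=
  ((exp_hasDerivAt n t).mul (hasDerivAt_id t)).mul
    ((laguerre_hasDerivAt a k _).comp t (sigma_hasDerivAt n t))

lemma part2 (n k : ℕ) (t : ℝ) :
      -(deriv (deriv (wk n k)) t) + t ^ (2 * (2 * n + 1)) * wk n k t =
        (4 * (k : ℝ) * ((n : ℝ) + 1) + 2 * (n : ℝ) + 3) * t ^ (2 * n) * wk n k t := by
  have hd1 : deriv (wk n k) = W1 n k (1/(2*(n:ℝ)+2)) :=
    funext fun t => (w_hasDerivAt n k (1/(2*(n:ℝ)+2)) t).deriv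
  have H2 : HasDerivAt (W1 n k (1/(2*(n:ℝ)+2))) _ t :=
    (((((exp_hasDerivAt n t).mul (hasDerivAt_pow (2*n+1) t).neg).mul (hasDerivAt_id t)).add
        ((exp_hasDerivAt n t).mul_const 1)).mul
      ((laguerre_hasDerivAt (1/(2*(n:ℝ)+2)) k (t^(2*n+2)/((n:ℝ)+1))).comp t (sigma_hasDerivAt n t))).add
    (((exp_hasDerivAt n t).mul (hasDerivAt_id t)).mul
      ((((lagD_hasDerivAt (1/(2*(n:ℝ)+2)) k (t^(2*n+2)/((n:ℝ)+1))).comp t (sigma_hasDerivAt n t)).mul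
        ((hasDerivAt_pow (2*n+1) t).const_mul 2))))
  rw [hd1, H2.deriv]
  simp only [Function.comp_apply, Pi.mul_apply, Pi.neg_apply, Pi.add_apply, id_eq]
  unfold wk
  have hne : ((n:ℝ)+1) ≠ 0 := by positivity
  have hne2 : (2*(n:ℝ)+2) ≠ 0 := by positivity
  have ode := laguerre_ode (1/(2*(n:ℝ)+2)) k (t^(2*n+2)/((n:ℝ)+1))
  have h4 := congrArg (fun r => 4*((n:ℝ)+1) * r) ode
  simp only [mul_zero] at h4
  have e1 : 4*((n:ℝ)+1) * (t^(2*n+2)/((n:ℝ)+1)) = 4 * t^(2*n+2) := by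
    field_simp
  have e2m : 4*((n:ℝ)+1)*((1/(2*(n:ℝ)+2))+1) = 4*(n:ℝ)+6 := by
    field_simp
    ring
  have ode2 : 4*t^(2*n+2) * lagD2 (1/(2*(n:ℝ)+2)) k (t^(2*n+2)/((n:ℝ)+1))
      + ((4*(n:ℝ)+6) - 4*t^(2*n+2)) * lagD (1/(2*(n:ℝ)+2)) k (t^(2*n+2)/((n:ℝ)+1))
      + (4*((n:ℝ)+1)*(k:ℝ)) * laguerre (1/(2*(n:ℝ)+2)) k (t^(2*n+2)/((n:ℝ)+1)) = 0 := by
    linear_combination h4 - (lagD2 (1/(2*(n:ℝ)+2)) k (t^(2*n+2)/((n:ℝ)+1))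
      - lagD (1/(2*(n:ℝ)+2)) k (t^(2*n+2)/((n:ℝ)+1))) * e1
      - lagD (1/(2*(n:ℝ)+2)) k (t^(2*n+2)/((n:ℝ)+1)) * e2m
  simp only [show 2*n+1-1 = 2*n from by omega]
  push_cast
  linear_combination (-(Real.exp (-(t ^ (2*n+2)) / (2*(n:ℝ)+2))) * t^(2*n+1)) * ode2

/-- `v_k` (resp. `w_k`) solves `-u'' + t^{2(2n+1)} u = E t^{2n} u` with
`E = E_k = 4k(n+1)+2n+1` (resp. `E = Ẽ_k = 4k(n+1)+2n+3`). -/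
theorem stmt_1 (n : ℕ) (hn : 0 < n) (k : ℕ) :
    (∀ t : ℝ,
      -(deriv (deriv (vk n k)) t) + t ^ (2 * (2 * n + 1)) * vk n k t =
        (4 * (k : ℝ) * ((n : ℝ) + 1) + 2 * (n : ℝ) + 1) * t ^ (2 * n) * vk n k t) ∧
    (∀ t : ℝ,
      -(deriv (deriv (wk n k)) t) + t ^ (2 * (2 * n + 1)) * wk n k t =
        (4 * (k : ℝ) * ((n : ℝ) + 1) + 2 * (n : ℝ) + 3) * t ^ (2 * n) * wk n k t) := by
  exact ⟨fun t => part1 n k t, fun t => part2 n k t⟩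
end

section
/- Let α = -1/(2n+2) and let v_k(t) = e^{-t^{2n+2}/(2n+2)} L_k^{(α)}(t^{2n+2}/(n+1)). Then for every k ≥ 1 and all t ∈ ℝ, t v_k'(t) = (n+1) ( (k+1) v_{k+1}(t) - (1+α) v_k(t) - (k+α) v_{k-1}(t) ), and for k = 0, t v_0'(t) = (n+1) ( v_1(t) - (1+α) v_0(t) ). -/
lemma genBinom_zero (a : ℝ) : genBinom a 0 = 1 := by simp [genBinom]

lemma genBinom_one (a : ℝ) : genBinom a 1 = a := by simp [genBinom]

lemma genBinom_succ_last (a : ℝ) (j : ℕ) :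
    ((j:ℝ)+1) * genBinom a (j+1) = (a - j) * genBinom a j := by
  unfold genBinom
  rw [Finset.prod_range_succ, Nat.factorial_succ]
  have h1 : (j.factorial : ℝ) ≠ 0 := Nat.cast_ne_zero.2 j.factorial_ne_zero
  have h2 : ((j:ℝ)+1) ≠ 0 := by positivity
  push_cast
  field_simp

lemma genBinom_succ_first (a : ℝ) (j : ℕ) :
    ((j:ℝ)+1) * genBinom (a+1) (j+1) = (a+1) * genBinom a j := by
  unfold genBinom
  rw [Finset.prod_range_succ', Nat.factorial_succ]
  have h1 : (j.factorial : ℝ) ≠ 0 := Nat.cast_ne_zero.2 j.factorial_ne_zero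
  have h2 : ((j:ℝ)+1) ≠ 0 := by positivity
  have h3 : ∀ i ∈ Finset.range j, (a + 1 - (↑(i+1):ℝ)) = a - i := by
    intro i _; push_cast; ring
  rw [Finset.prod_congr rfl h3]
  push_cast
  field_simp
  ring

lemma hasDerivAt_laguerre (a : ℝ) (k : ℕ) (s : ℝ) :
    HasDerivAt (fun x => laguerre a k x) (lagD a k s) s := by
  unfold laguerre lagD
  apply HasDerivAt.fun_sum
  intro i _
  exact (HasDerivAt.const_mul ((-1:ℝ)^i * genBinom ((k:ℝ)+a) (k-i)) (hasDerivAt_pow i s)).div_const _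

lemma E0 (a : ℝ) (p j : ℕ) :
    ((p:ℝ)+(j:ℝ)+3) * genBinom ((p:ℝ)+(j:ℝ)+3+a) (j+2)
      = (1+a) * genBinom ((p:ℝ)+(j:ℝ)+2+a) (j+1)
        + ((p:ℝ)+(j:ℝ)+2+a) * genBinom ((p:ℝ)+(j:ℝ)+1+a) j
        + 2*((p:ℝ)+1) * genBinom ((p:ℝ)+(j:ℝ)+2+a) (j+1)
        + ((p:ℝ)+1) * genBinom ((p:ℝ)+(j:ℝ)+2+a) (j+2) := by
  have g1 : ((j:ℝ)+2) * genBinom ((p:ℝ)+(j:ℝ)+3+a) (j+2)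
      = ((p:ℝ)+(j:ℝ)+3+a) * genBinom ((p:ℝ)+(j:ℝ)+2+a) (j+1) := by
    have h := genBinom_succ_first ((p:ℝ)+(j:ℝ)+2+a) (j+1)
    push_cast at h
    rw [show ((p:ℝ)+(j:ℝ)+3+a) = ((p:ℝ)+(j:ℝ)+2+a)+1 from by ring]
    linarith [h]
  have g2 : ((j:ℝ)+1) * genBinom ((p:ℝ)+(j:ℝ)+2+a) (j+1)
      = ((p:ℝ)+(j:ℝ)+2+a) * genBinom ((p:ℝ)+(j:ℝ)+1+a) j := by
    have h := genBinom_succ_first ((p:ℝ)+(j:ℝ)+1+a) j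
    rw [show ((p:ℝ)+(j:ℝ)+2+a) = ((p:ℝ)+(j:ℝ)+1+a)+1 from by ring]
    linarith [h]
  have g3 : ((j:ℝ)+2) * genBinom ((p:ℝ)+(j:ℝ)+2+a) (j+2)
      = ((p:ℝ)+1+a) * genBinom ((p:ℝ)+(j:ℝ)+2+a) (j+1) := by
    have h := genBinom_succ_last ((p:ℝ)+(j:ℝ)+2+a) (j+1)
    push_cast at h
    rw [show ((p:ℝ)+1+a) = ((p:ℝ)+(j:ℝ)+2+a) - ((j:ℝ)+1) from by ring]
    linarith [h]
  have hx : (((j:ℝ)+1)*((j:ℝ)+2)) ≠ 0 := by positivity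
  apply mul_left_cancel₀ hx
  linear_combination ((j:ℝ)+1)*((p:ℝ)+(j:ℝ)+3) * g1 + ((j:ℝ)+1)*((j:ℝ)+2) * g2
    - ((j:ℝ)+1)*((p:ℝ)+1) * g3

lemma E0z (a : ℝ) (j : ℕ) :
    ((j:ℝ)+2) * genBinom ((j:ℝ)+2+a) (j+2)
      = (1+a) * genBinom ((j:ℝ)+1+a) (j+1) + ((j:ℝ)+1+a) * genBinom ((j:ℝ)+a) j := by
  have g1 : ((j:ℝ)+2) * genBinom ((j:ℝ)+2+a) (j+2)
      = ((j:ℝ)+2+a) * genBinom ((j:ℝ)+1+a) (j+1) := by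
    have h := genBinom_succ_first ((j:ℝ)+1+a) (j+1)
    push_cast at h
    rw [show ((j:ℝ)+2+a) = ((j:ℝ)+1+a)+1 from by ring]
    linarith [h]
  have g2 : ((j:ℝ)+1) * genBinom ((j:ℝ)+1+a) (j+1)
      = ((j:ℝ)+1+a) * genBinom ((j:ℝ)+a) j := by
    have h := genBinom_succ_first ((j:ℝ)+a) j
    rw [show ((j:ℝ)+1+a) = ((j:ℝ)+a)+1 from by ring]
    linarith [h]
  linear_combination g1 + g2

lemma key (a s : ℝ) (m : ℕ) :
    ((m:ℝ)+2) * laguerre a (m+2) s - (1+a) * laguerre a (m+1) s - ((m:ℝ)+1+a) * laguerre a m s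
      = 2 * (s * lagD a (m+1) s) - s * laguerre a (m+1) s := by
  unfold laguerre lagD
  push_cast
  have hD : (s * ∑ x ∈ Finset.range (m + 1 + 1),
        (-1:ℝ) ^ x * genBinom ((m:ℝ) + 1 + a) (m + 1 - x) * ((x:ℝ) * s ^ (x - 1)) / ↑x.factorial)
      = ∑ x ∈ Finset.range (m + 1 + 1),
        (x:ℝ) * ((-1:ℝ) ^ x * genBinom ((m:ℝ) + 1 + a) (m + 1 - x) * s ^ x / ↑x.factorial) := by
    rw [Finset.mul_sum]
    refine Finset.sum_congr rfl fun i _ => ?_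
    rcases i with _ | p
    · simp
    · simp only [Nat.succ_sub_one]
      push_cast
      ring
  have hS : (s * ∑ x ∈ Finset.range (m + 1 + 1),
        (-1:ℝ) ^ x * genBinom ((m:ℝ) + 1 + a) (m + 1 - x) * s ^ x / ↑x.factorial)
      = ∑ x ∈ Finset.range (m + 2 + 1),
        (if x = 0 then 0 else
          s * ((-1:ℝ) ^ (x-1) * genBinom ((m:ℝ) + 1 + a) (m + 1 - (x-1)) * s ^ (x-1) / ↑(x-1).factorial)) := by
    conv_rhs => rw [Finset.sum_range_succ']
    simp [Finset.mul_sum]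
  rw [hD, hS]
  rw [Finset.sum_range_succ (fun x => (-1:ℝ) ^ x * genBinom ((m:ℝ) + 2 + a) (m + 2 - x) * s ^ x / ↑x.factorial) (m+2)]
  rw [Finset.sum_range_succ (fun x => (-1:ℝ) ^ x * genBinom ((m:ℝ) + 2 + a) (m + 2 - x) * s ^ x / ↑x.factorial) (m+1)]
  rw [Finset.sum_range_succ (fun x => (-1:ℝ) ^ x * genBinom ((m:ℝ) + 1 + a) (m + 1 - x) * s ^ x / ↑x.factorial) (m+1)]
  rw [Finset.sum_range_succ (fun x => (x:ℝ) * ((-1:ℝ) ^ x * genBinom ((m:ℝ) + 1 + a) (m + 1 - x) * s ^ x / ↑x.factorial)) (m+1)]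
  rw [Finset.sum_range_succ (fun x => if x = 0 then 0 else
          s * ((-1:ℝ) ^ (x-1) * genBinom ((m:ℝ) + 1 + a) (m + 1 - (x-1)) * s ^ (x-1) / ↑(x-1).factorial)) (m+2)]
  rw [Finset.sum_range_succ (fun x => if x = 0 then 0 else
          s * ((-1:ℝ) ^ (x-1) * genBinom ((m:ℝ) + 1 + a) (m + 1 - (x-1)) * s ^ (x-1) / ↑(x-1).factorial)) (m+1)]
  have hmain : ∑ i ∈ Finset.range (m+1),
      (((m:ℝ)+2) * ((-1:ℝ)^i * genBinom ((m:ℝ)+2+a) (m+2-i) * s^i/(i.factorial:ℝ))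
      - (1+a) * ((-1:ℝ)^i * genBinom ((m:ℝ)+1+a) (m+1-i) * s^i/(i.factorial:ℝ))
      - ((m:ℝ)+1+a) * ((-1:ℝ)^i * genBinom ((m:ℝ)+a) (m-i) * s^i/(i.factorial:ℝ))
      - 2*((i:ℝ) * ((-1:ℝ)^i * genBinom ((m:ℝ)+1+a) (m+1-i) * s^i/(i.factorial:ℝ)))
      + (if i = 0 then 0 else s * ((-1:ℝ)^(i-1) * genBinom ((m:ℝ)+1+a) (m+1-(i-1)) * s^(i-1)/((i-1).factorial:ℝ)))) = 0 := by
    refine Finset.sum_eq_zero fun i hi => ?_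
    rw [Finset.mem_range] at hi
    obtain ⟨j, rfl⟩ : ∃ j, m = i + j := ⟨m - i, by omega⟩
    rcases i with _ | p
    · simp only [if_pos rfl, Nat.zero_add, Nat.cast_zero, pow_zero, Nat.factorial_zero,
        Nat.sub_zero]
      push_cast
      linear_combination E0z a j
    · simp only [if_neg (Nat.succ_ne_zero p), Nat.succ_sub_one]
      rw [show p+1+j+2-(p+1) = j+2 by omega, show p+1+j+1-(p+1) = j+1 by omega,
        show p+1+j-(p+1) = j by omega, show p+1+j+1-p = j+2 by omega]
      push_cast
      rw [show ((p:ℝ) + 1 + ↑j + 2 + a) = ((p:ℝ)+(j:ℝ)+3+a) from by ring,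
        show ((p:ℝ) + 1 + ↑j + 1 + a) = ((p:ℝ)+(j:ℝ)+2+a) from by ring,
        show ((p:ℝ) + 1 + ↑j + a) = ((p:ℝ)+(j:ℝ)+1+a) from by ring,
        show (((p+1).factorial:ℝ)) = ((p:ℝ)+1)*(p.factorial:ℝ) from by
          rw [Nat.factorial_succ]; push_cast; ring]
      have hpf : (p.factorial:ℝ) ≠ 0 := Nat.cast_ne_zero.2 p.factorial_ne_zero
      have hp1 : ((p:ℝ)+1) ≠ 0 := by positivity
      have h := E0 a p j
      field_simp
      linear_combination (-(-1:ℝ)^p * s^(p+1)) * h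
  simp only [Finset.sum_add_distrib, Finset.sum_sub_distrib, ← Finset.mul_sum] at hmain
  have b1 : ((m:ℝ)+2) * ((-1:ℝ)^(m+1) * genBinom ((m:ℝ)+2+a) (m+2-(m+1)) * s^(m+1)/((m+1).factorial:ℝ))
      - (1+a)*((-1:ℝ)^(m+1) * genBinom ((m:ℝ)+1+a) (m+1-(m+1)) * s^(m+1)/((m+1).factorial:ℝ))
      - 2*(((m+1:ℕ):ℝ) * ((-1:ℝ)^(m+1)*genBinom ((m:ℝ)+1+a) (m+1-(m+1)) * s^(m+1)/((m+1).factorial:ℝ)))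
      + (if m+1 = 0 then 0 else s*((-1:ℝ)^(m+1-1) * genBinom ((m:ℝ)+1+a) (m+1-(m+1-1)) * s^(m+1-1)/((m+1-1).factorial:ℝ))) = 0 := by
    rw [if_neg (Nat.succ_ne_zero m)]
    rw [show m+2-(m+1) = 1 by omega, show m+1-(m+1) = 0 by omega, show m+1-1 = m by omega,
      show m+1-m = 1 by omega]
    rw [genBinom_zero, genBinom_one, genBinom_one]
    rw [show (((m+1).factorial:ℝ)) = ((m:ℝ)+1)*(m.factorial:ℝ) from by
      rw [Nat.factorial_succ]; push_cast; ring]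
    have hmf : (m.factorial:ℝ) ≠ 0 := Nat.cast_ne_zero.2 m.factorial_ne_zero
    have hm1 : ((m:ℝ)+1) ≠ 0 := by positivity
    push_cast
    field_simp
    ring
  have b2 : ((m:ℝ)+2) * ((-1:ℝ)^(m+2) * genBinom ((m:ℝ)+2+a) (m+2-(m+2)) * s^(m+2)/((m+2).factorial:ℝ))
      + (if m+2 = 0 then 0 else s*((-1:ℝ)^(m+2-1) * genBinom ((m:ℝ)+1+a) (m+1-(m+2-1)) * s^(m+2-1)/((m+2-1).factorial:ℝ))) = 0 := by
    rw [if_neg (Nat.succ_ne_zero (m+1))]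
    rw [show m+2-(m+2) = 0 by omega, show m+2-1 = m+1 by omega, show m+1-(m+1) = 0 by omega]
    rw [genBinom_zero, genBinom_zero]
    rw [show (((m+2).factorial:ℝ)) = ((m:ℝ)+2)*((m+1).factorial:ℝ) from by
      rw [show m+2 = (m+1)+1 from rfl, Nat.factorial_succ]; push_cast; ring]
    have hmf : ((m+1).factorial:ℝ) ≠ 0 := Nat.cast_ne_zero.2 (m+1).factorial_ne_zero
    have hm2 : ((m:ℝ)+2) ≠ 0 := by positivity
    field_simp
    ring
  linear_combination hmain + b1 + b2

lemma key0 (a s : ℝ) :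
    1 * laguerre a 1 s - (1+a) * laguerre a 0 s = 2*(s*lagD a 0 s) - s * laguerre a 0 s := by
  simp [laguerre, lagD, genBinom_zero, genBinom_one, Finset.sum_range_succ]

lemma t_mul_deriv (n k : ℕ) (t : ℝ) :
    t * deriv (vk n k) t
      = ((n:ℝ)+1) * Real.exp (-(t^(2*n+2))/(2*(n:ℝ)+2)) *
        (2 * ((t^(2*n+2)/((n:ℝ)+1)) * lagD (-(1/(2*(n:ℝ)+2))) k (t^(2*n+2)/((n:ℝ)+1)))
          - (t^(2*n+2)/((n:ℝ)+1)) * laguerre (-(1/(2*(n:ℝ)+2))) k (t^(2*n+2)/((n:ℝ)+1))) := by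
  set a := -(1/(2*(n:ℝ)+2)) with ha
  have hm : (2*n+2) - 1 = 2*n+1 := by omega
  have hpow : HasDerivAt (fun t : ℝ => t ^ (2*n+2)) (((2*n+2:ℕ):ℝ) * t^(2*n+1)) t := by
    have := hasDerivAt_pow (2*n+2) t
    rwa [hm] at this
  have hexp : HasDerivAt (fun t : ℝ => Real.exp (-(t^(2*n+2))/(2*(n:ℝ)+2)))
      (Real.exp (-(t^(2*n+2))/(2*(n:ℝ)+2)) * (-(((2*n+2:ℕ):ℝ) * t^(2*n+1))/(2*(n:ℝ)+2))) t :=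
    (hpow.neg.div_const _).exp
  have hcomp : HasDerivAt (fun t : ℝ => laguerre a k (t^(2*n+2)/((n:ℝ)+1)))
      (lagD a k (t^(2*n+2)/((n:ℝ)+1)) * (((2*n+2:ℕ):ℝ) * t^(2*n+1)/((n:ℝ)+1))) t :=
    (hasDerivAt_laguerre a k _).comp t (hpow.div_const _)
  have hv : HasDerivAt (vk n k)
      (Real.exp (-(t^(2*n+2))/(2*(n:ℝ)+2)) * (-(((2*n+2:ℕ):ℝ) * t^(2*n+1))/(2*(n:ℝ)+2))
          * laguerre a k (t^(2*n+2)/((n:ℝ)+1))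
        + Real.exp (-(t^(2*n+2))/(2*(n:ℝ)+2))
          * (lagD a k (t^(2*n+2)/((n:ℝ)+1)) * (((2*n+2:ℕ):ℝ) * t^(2*n+1)/((n:ℝ)+1)))) t :=
    hexp.mul hcomp
  rw [hv.deriv]
  have h1 : ((n:ℝ)+1) ≠ 0 := by positivity
  push_cast
  field_simp
  ring


/-- The three-term recurrence relation for `t v_k'(t)`, with `α = -1/(2n+2)`:
for `k ≥ 1`, `t v_k' = (n+1)((k+1) v_{k+1} - (1+α) v_k - (k+α) v_{k-1})`,
and `t v_0' = (n+1)(v_1 - (1+α) v_0)`. -/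
theorem stmt_3 (n : ℕ) (hn : 0 < n) :
    (∀ k : ℕ, 1 ≤ k → ∀ t : ℝ,
      t * deriv (vk n k) t =
        ((n : ℝ) + 1) *
          (((k : ℝ) + 1) * vk n (k + 1) t
            - (1 + (-(1 / (2 * (n : ℝ) + 2)))) * vk n k t
            - ((k : ℝ) + (-(1 / (2 * (n : ℝ) + 2)))) * vk n (k - 1) t)) ∧
    (∀ t : ℝ,
      t * deriv (vk n 0) t =
        ((n : ℝ) + 1) *
          (vk n 1 t - (1 + (-(1 / (2 * (n : ℝ) + 2)))) * vk n 0 t)) := by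
  constructor
  · intro k hk t
    obtain ⟨m, rfl⟩ : ∃ m, k = m+1 := ⟨k-1, by omega⟩
    rw [t_mul_deriv]
    have hkey := key (-(1/(2*(n:ℝ)+2))) (t^(2*n+2)/((n:ℝ)+1)) m
    simp only [Nat.add_sub_cancel, show m+1+1 = m+2 from rfl]
    unfold vk
    push_cast
    linear_combination (-((n:ℝ)+1)) * Real.exp (-(t^(2*n+2))/(2*(n:ℝ)+2)) * hkey
  · intro t
    rw [t_mul_deriv]
    have hkey := key0 (-(1/(2*(n:ℝ)+2))) (t^(2*n+2)/((n:ℝ)+1))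
    unfold vk
    linear_combination (-((n:ℝ)+1)) * Real.exp (-(t^(2*n+2))/(2*(n:ℝ)+2)) * hkey
end

section
/- For every δ ∈ (0, 1/2] there exists a constant C₀ > 0, independent of k, such that for every k ∈ ℤ₊ and every t ∈ ℝ: |v_k(t)| ≤ C₀^{k+1} e^{-B t^{2n+2}}, where B = (1 - 2 δ^{2(n+1)})/(2n+2). -/
open MeasureTheory

/-- `v_k` normalized so that `∫_ℝ t^{2n} v_k(t)² dt = 1`. -/
noncomputable def nvk (n k : ℕ) (t : ℝ) : ℝ :=
  vk n k t / Real.sqrt (∫ s : ℝ, s ^ (2 * n) * (vk n k s) ^ 2)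

/-- `w_k` normalized so that `∫_ℝ t^{2n} w_k(t)² dt = 1`. -/
noncomputable def nwk (n k : ℕ) (t : ℝ) : ℝ :=
  wk n k t / Real.sqrt (∫ s : ℝ, s ^ (2 * n) * (wk n k s) ^ 2)

lemma continuous_vk (n k : ℕ) : Continuous (vk n k) := by
  unfold vk laguerre genBinom; fun_prop

lemma prod_sub_eq_factorial (k : ℕ) :
    ∏ i ∈ Finset.range k, ((k : ℝ) - i) = Nat.factorial k := by
  have h : ∀ i ∈ Finset.range k, ((k : ℝ) - i) = ((k - i : ℕ) : ℝ) := by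
    intro i hi
    have := (Finset.mem_range.mp hi).le
    push_cast [Nat.cast_sub this]
    ring
  rw [Finset.prod_congr rfl h, ← Nat.cast_prod]
  norm_cast
  rw [← Finset.prod_range_reflect (fun i => k - i) k, ← Finset.prod_range_add_one_eq_factorial]
  apply Finset.prod_congr rfl
  intro i hi
  have := Finset.mem_range.mp hi
  omega

lemma genBinom_pos {a : ℝ} (ha : -1 < a) {k j : ℕ} (hj : j ≤ k) :
    0 < genBinom ((k : ℝ) + a) j := by
  unfold genBinom
  apply div_pos
  · apply Finset.prod_pos
    intro i hi
    have hik : i + 1 ≤ k := le_trans (Finset.mem_range.mp hi) hj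
    have : (i : ℝ) + 1 ≤ k := by exact_mod_cast hik
    linarith
  · exact_mod_cast Nat.factorial_pos j

lemma genBinom_le {a : ℝ} (ha : -1 < a) (ha0 : a ≤ 0) {k j : ℕ} (hj : j ≤ k) :
    genBinom ((k : ℝ) + a) j ≤ (k : ℝ) ^ j / Nat.factorial j := by
  unfold genBinom
  have h1 : ∏ i ∈ Finset.range j, ((k : ℝ) + a - i) ≤ (k : ℝ) ^ j := by
    calc ∏ i ∈ Finset.range j, ((k : ℝ) + a - i) ≤ ∏ _i ∈ Finset.range j, (k : ℝ) := by
          apply Finset.prod_le_prod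
          · intro i hi
            have hik : i + 1 ≤ k := le_trans (Finset.mem_range.mp hi) hj
            have : (i : ℝ) + 1 ≤ k := by exact_mod_cast hik
            linarith
          · intro i hi
            have : (0:ℝ) ≤ i := Nat.cast_nonneg i
            linarith
      _ = (k : ℝ) ^ j := by rw [Finset.prod_const, Finset.card_range]
  have hf : (0:ℝ) < Nat.factorial j := by exact_mod_cast Nat.factorial_pos j
  exact div_le_div_of_nonneg_right h1 hf.le

lemma genBinom_diag_ge {a : ℝ} (ha : -(1/4) ≤ a) (ha0 : a ≤ 0) (k : ℕ) :
    (3/4 : ℝ) ^ k ≤ genBinom ((k : ℝ) + a) k := by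
  unfold genBinom
  have hf : (0:ℝ) < Nat.factorial k := by exact_mod_cast Nat.factorial_pos k
  rw [le_div_iff₀ hf]
  calc (3/4 : ℝ) ^ k * Nat.factorial k
      = ∏ i ∈ Finset.range k, (3/4 * ((k : ℝ) - i)) := by
        rw [Finset.prod_mul_distrib, Finset.prod_const, Finset.card_range,
          prod_sub_eq_factorial]
    _ ≤ ∏ i ∈ Finset.range k, ((k : ℝ) + a - i) := by
        apply Finset.prod_le_prod
        · intro i hi
          have hik : i + 1 ≤ k := Finset.mem_range.mp hi
          have : (i : ℝ) + 1 ≤ k := by exact_mod_cast hik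
          linarith
        · intro i hi
          have hik : i + 1 ≤ k := Finset.mem_range.mp hi
          have : (i : ℝ) + 1 ≤ k := by exact_mod_cast hik
          linarith

lemma pow_div_factorial_le_exp (k j : ℕ) (hj : j ≤ k) :
    ((k : ℝ)) ^ j / Nat.factorial j ≤ Real.exp k := by
  calc ((k : ℝ)) ^ j / Nat.factorial j
      ≤ ∑ i ∈ Finset.range (k + 1), (k : ℝ) ^ i / Nat.factorial i := by
        apply Finset.single_le_sum (f := fun i => (k : ℝ) ^ i / (Nat.factorial i : ℝ))
        · intro i _; positivity
        · exact Finset.mem_range.mpr (by omega)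
    _ ≤ Real.exp k := Real.sum_le_exp_of_nonneg (Nat.cast_nonneg k) _

lemma genBinom_le_exp {a : ℝ} (ha : -1 < a) (ha0 : a ≤ 0) {k j : ℕ} (hj : j ≤ k) :
    genBinom ((k : ℝ) + a) j ≤ Real.exp k :=
  le_trans (genBinom_le ha ha0 hj) (pow_div_factorial_le_exp k j hj)

lemma laguerre_abs_le {a : ℝ} (ha : -1 < a) (ha0 : a ≤ 0) (k : ℕ) {d : ℝ}
    (hd : 0 < d) (hd1 : d ≤ 1) {s : ℝ} (hs : 0 ≤ s) :
    |laguerre a k s| ≤ Real.exp k / d ^ k * Real.exp (d * s) := by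
  unfold laguerre
  calc |∑ i ∈ Finset.range (k + 1),
        (-1 : ℝ) ^ i * genBinom ((k : ℝ) + a) (k - i) * s ^ i / (Nat.factorial i : ℝ)|
      ≤ ∑ i ∈ Finset.range (k + 1),
        |(-1 : ℝ) ^ i * genBinom ((k : ℝ) + a) (k - i) * s ^ i / (Nat.factorial i : ℝ)| :=
        Finset.abs_sum_le_sum_abs _ _
    _ ≤ ∑ i ∈ Finset.range (k + 1),
        Real.exp k / d ^ k * ((d * s) ^ i / (Nat.factorial i : ℝ)) := by
        apply Finset.sum_le_sum
        intro i hi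
        have hik : i ≤ k := by have := Finset.mem_range.mp hi; omega
        have hg := genBinom_pos ha (Nat.sub_le k i)
        have hfi : (0:ℝ) < Nat.factorial i := by exact_mod_cast Nat.factorial_pos i
        rw [abs_div, abs_mul, abs_mul, abs_pow, abs_neg, abs_one, one_pow, one_mul,
          abs_of_pos hg, abs_pow, abs_of_nonneg hs, Nat.abs_cast]
        have h1 : genBinom ((k : ℝ) + a) (k - i) ≤ Real.exp k :=
          genBinom_le_exp ha ha0 (Nat.sub_le k i)
        have hdd : d ^ k ≤ d ^ i := pow_le_pow_of_le_one hd.le hd1 hik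
        have key : genBinom ((k : ℝ) + a) (k - i) * s ^ i ≤ Real.exp k / d ^ k * (d * s) ^ i := by
          rw [mul_pow, show Real.exp k / d ^ k * (d ^ i * s ^ i)
            = Real.exp k * (d ^ i / d ^ k) * s ^ i by ring]
          have h3 : genBinom ((k : ℝ) + a) (k - i) ≤ Real.exp k * (d ^ i / d ^ k) := by
            have h4 : (1:ℝ) ≤ d ^ i / d ^ k := (one_le_div (pow_pos hd k)).mpr hdd
            nlinarith [Real.exp_pos (k : ℝ)]
          exact mul_le_mul_of_nonneg_right h3 (pow_nonneg hs i)
        calc genBinom ((k : ℝ) + a) (k - i) * s ^ i / (Nat.factorial i : ℝ)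
            ≤ Real.exp k / d ^ k * (d * s) ^ i / (Nat.factorial i : ℝ) :=
              div_le_div_of_nonneg_right key hfi.le
          _ = Real.exp k / d ^ k * ((d * s) ^ i / (Nat.factorial i : ℝ)) := by ring
    _ = Real.exp k / d ^ k * ∑ i ∈ Finset.range (k + 1), ((d * s) ^ i / (Nat.factorial i : ℝ)) := by
        rw [Finset.mul_sum]
    _ ≤ Real.exp k / d ^ k * Real.exp (d * s) := by
        apply mul_le_mul_of_nonneg_left (Real.sum_le_exp_of_nonneg (by positivity) _)
        positivity

lemma laguerre_lower {a : ℝ} (ha : -(1/4) ≤ a) (ha0 : a ≤ 0) (k : ℕ) {s : ℝ} (hs : 0 ≤ s)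
    (hs2 : s ≤ (3/4 : ℝ) ^ k * Real.exp (-((k : ℝ) + 1)) / 2) :
    (3/4 : ℝ) ^ k / 2 ≤ laguerre a k s := by
  have ha1 : (-1 : ℝ) < a := by linarith
  have hq : (3/4 : ℝ) ^ k ≤ 1 := pow_le_one₀ (by norm_num) (by norm_num)
  have he : Real.exp (-((k : ℝ) + 1)) ≤ 1 := by
    rw [Real.exp_le_one_iff]
    have : (0:ℝ) ≤ (k : ℝ) := Nat.cast_nonneg k
    linarith
  have hs1 : s ≤ 1 := by
    nlinarith [pow_nonneg (by norm_num : (0:ℝ) ≤ 3/4) k, Real.exp_pos (-((k : ℝ) + 1))]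
  unfold laguerre
  rw [Finset.sum_range_succ']
  have h0 : (3/4 : ℝ) ^ k
      ≤ (-1 : ℝ) ^ 0 * genBinom ((k : ℝ) + a) (k - 0) * s ^ 0 / (Nat.factorial 0 : ℝ) := by
    simpa using genBinom_diag_ge ha ha0 k
  have htail : |∑ i ∈ Finset.range k,
      (-1 : ℝ) ^ (i + 1) * genBinom ((k : ℝ) + a) (k - (i + 1)) * s ^ (i + 1)
        / (Nat.factorial (i + 1) : ℝ)| ≤ (3/4 : ℝ) ^ k / 2 := by
    calc |∑ i ∈ Finset.range k,
        (-1 : ℝ) ^ (i + 1) * genBinom ((k : ℝ) + a) (k - (i + 1)) * s ^ (i + 1)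
          / (Nat.factorial (i + 1) : ℝ)|
        ≤ ∑ i ∈ Finset.range k,
          |(-1 : ℝ) ^ (i + 1) * genBinom ((k : ℝ) + a) (k - (i + 1)) * s ^ (i + 1)
            / (Nat.factorial (i + 1) : ℝ)| := Finset.abs_sum_le_sum_abs _ _
      _ ≤ ∑ i ∈ Finset.range k, Real.exp k * s * (1 ^ i / (Nat.factorial i : ℝ)) := by
          apply Finset.sum_le_sum
          intro i _
          have hg := genBinom_pos ha1 (Nat.sub_le k (i + 1))
          have hfi : (0:ℝ) < Nat.factorial i := by exact_mod_cast Nat.factorial_pos i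
          have hfi1 : (0:ℝ) < Nat.factorial (i + 1) := by
            exact_mod_cast Nat.factorial_pos (i + 1)
          rw [abs_div, abs_mul, abs_mul, abs_pow, abs_neg, abs_one, one_pow, one_mul,
            abs_of_pos hg, abs_pow, abs_of_nonneg hs, Nat.abs_cast, one_pow]
          have h1 : genBinom ((k : ℝ) + a) (k - (i + 1)) ≤ Real.exp k :=
            genBinom_le_exp ha1 ha0 (Nat.sub_le k (i + 1))
          have h2 : s ^ (i + 1) ≤ s := by
            calc s ^ (i + 1) = s * s ^ i := by ring
              _ ≤ s * 1 := mul_le_mul_of_nonneg_left (pow_le_one₀ hs hs1) hs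
              _ = s := mul_one s
          have h3 : (Nat.factorial i : ℝ) ≤ (Nat.factorial (i + 1) : ℝ) := by
            exact_mod_cast Nat.factorial_le (Nat.le_succ i)
          calc genBinom ((k : ℝ) + a) (k - (i + 1)) * s ^ (i + 1) / (Nat.factorial (i + 1) : ℝ)
              ≤ Real.exp k * s / (Nat.factorial (i + 1) : ℝ) := by
                apply div_le_div_of_nonneg_right _ hfi1.le
                calc genBinom ((k : ℝ) + a) (k - (i + 1)) * s ^ (i + 1)
                    ≤ Real.exp k * s ^ (i + 1) :=
                      mul_le_mul_of_nonneg_right h1 (pow_nonneg hs _)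
                  _ ≤ Real.exp k * s := mul_le_mul_of_nonneg_left h2 (Real.exp_pos _).le
            _ ≤ Real.exp k * s / (Nat.factorial i : ℝ) := by
                apply div_le_div_of_nonneg_left _ hfi h3
                positivity
            _ = Real.exp k * s * (1 / (Nat.factorial i : ℝ)) := by ring
      _ = Real.exp k * s * ∑ i ∈ Finset.range k, (1 : ℝ) ^ i / (Nat.factorial i : ℝ) := by
          rw [Finset.mul_sum]
      _ ≤ Real.exp k * s * Real.exp 1 := by
          apply mul_le_mul_of_nonneg_left (Real.sum_le_exp_of_nonneg (by norm_num) _)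
          positivity
      _ ≤ (3/4 : ℝ) ^ k / 2 := by
          have : Real.exp k * Real.exp 1 * Real.exp (-((k : ℝ) + 1)) = 1 := by
            rw [← Real.exp_add, ← Real.exp_add]
            rw [show (k:ℝ) + 1 + -((k:ℝ)+1) = 0 by ring, Real.exp_zero]
          nlinarith [Real.exp_pos (k : ℝ), Real.exp_pos (1 : ℝ),
            Real.exp_pos (-((k : ℝ) + 1)), mul_le_mul_of_nonneg_left hs2
              (mul_pos (Real.exp_pos (k:ℝ)) (Real.exp_pos 1)).le]
  have := abs_le.mp htail
  linarith [this.1, h0]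

lemma exp_one_div_ge_one {d : ℝ} (hd : 0 < d) (hd1 : d ≤ 1) : 1 ≤ Real.exp 1 / d := by
  rw [le_div_iff₀ hd]
  have := Real.add_one_le_exp (1:ℝ)
  linarith

lemma vk_abs_le {n : ℕ} (hn : 0 < n) (k : ℕ) {d : ℝ} (hd : 0 < d) (hd1 : d ≤ 1) (t : ℝ) :
    |vk n k t| ≤ (Real.exp 1 / d) ^ (k + 1) *
      Real.exp (-((1 - 2 * d) / (2 * (n : ℝ) + 2)) * t ^ (2 * n + 2)) := by
  have hn2 : (0:ℝ) < 2 * (n : ℝ) + 2 := by positivity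
  have hn1 : (0:ℝ) < (n : ℝ) + 1 := by positivity
  have hT : 0 ≤ t ^ (2 * n + 2) := by
    rw [show 2 * n + 2 = (n + 1) * 2 by ring, pow_mul]
    positivity
  have ha1 : (-1 : ℝ) < -(1 / (2 * (n : ℝ) + 2)) := by
    have h2 : 1 / (2 * (n : ℝ) + 2) ≤ 1 / 2 := by
      apply div_le_div_of_nonneg_left (by norm_num) (by norm_num)
      have : (0:ℝ) ≤ (n:ℝ) := Nat.cast_nonneg n
      linarith
    linarith
  have ha0 : -(1 / (2 * (n : ℝ) + 2)) ≤ 0 := by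
    have : (0:ℝ) ≤ 1 / (2 * (n : ℝ) + 2) := by positivity
    linarith
  have hL := laguerre_abs_le ha1 ha0 k hd hd1
    (s := t ^ (2 * n + 2) / ((n : ℝ) + 1)) (by positivity)
  have hexpk : Real.exp (k : ℝ) = Real.exp 1 ^ k := by
    rw [← Real.exp_nat_mul]; norm_num
  unfold vk
  rw [abs_mul, abs_of_pos (Real.exp_pos _)]
  calc Real.exp (-t ^ (2 * n + 2) / (2 * (n : ℝ) + 2)) *
        |laguerre (-(1 / (2 * (n : ℝ) + 2))) k (t ^ (2 * n + 2) / ((n : ℝ) + 1))|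
      ≤ Real.exp (-t ^ (2 * n + 2) / (2 * (n : ℝ) + 2)) *
        (Real.exp k / d ^ k * Real.exp (d * (t ^ (2 * n + 2) / ((n : ℝ) + 1)))) :=
        mul_le_mul_of_nonneg_left hL (Real.exp_pos _).le
    _ = (Real.exp 1 / d) ^ k *
        Real.exp (-((1 - 2 * d) / (2 * (n : ℝ) + 2)) * t ^ (2 * n + 2)) := by
        rw [hexpk, div_pow, show Real.exp (-t ^ (2*n+2) / (2 * (n:ℝ) + 2)) *
            (Real.exp 1 ^ k / d ^ k * Real.exp (d * (t ^ (2*n+2) / ((n:ℝ) + 1))))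
          = Real.exp 1 ^ k / d ^ k * (Real.exp (-t ^ (2*n+2) / (2 * (n:ℝ) + 2)) *
            Real.exp (d * (t ^ (2*n+2) / ((n:ℝ) + 1)))) by ring, ← Real.exp_add]
        congr 1
        field_simp
        ring
    _ ≤ (Real.exp 1 / d) ^ (k + 1) *
        Real.exp (-((1 - 2 * d) / (2 * (n : ℝ) + 2)) * t ^ (2 * n + 2)) := by
        apply mul_le_mul_of_nonneg_right _ (Real.exp_pos _).le
        exact pow_le_pow_right₀ (exp_one_div_ge_one hd hd1) (Nat.le_succ k)

lemma sq_le_pow_add_one {n : ℕ} (t : ℝ) : t ^ 2 ≤ t ^ (2 * n + 2) + 1 := by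
  have hT : 0 ≤ t ^ (2 * n + 2) := by
    rw [show 2 * n + 2 = (n + 1) * 2 by ring, pow_mul]
    positivity
  rcases le_or_gt (t ^ 2) 1 with h | h
  · linarith
  · have h1 : t ^ (2 * n + 2) = (t ^ 2) ^ (n + 1) := by
      rw [← pow_mul]; ring_nf
    have h2 : t ^ 2 ≤ (t ^ 2) ^ (n + 1) := le_self_pow₀ h.le (Nat.succ_ne_zero n)
    linarith

lemma vk_integrable {n : ℕ} (hn : 0 < n) (k : ℕ) :
    Integrable (fun t : ℝ => t ^ (2 * n) * vk n k t ^ 2) := by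
  set d : ℝ := 1 / 4 with hd_def
  have hd : (0:ℝ) < d := by norm_num
  have hd1 : d ≤ 1 := by norm_num
  set B : ℝ := (1 - 2 * d) / (2 * (n : ℝ) + 2) with hB_def
  have hB : 0 < B := by
    apply div_pos (by norm_num) (by positivity)
  have h2B : (0:ℝ) < 2 * B := by linarith
  have h0 := integrable_rpow_mul_exp_neg_mul_sq h2B (s := ((2 * n : ℕ) : ℝ))
    (lt_of_lt_of_le neg_one_lt_zero (Nat.cast_nonneg _))
  simp_rw [Real.rpow_natCast] at h0
  set C : ℝ := ((Real.exp 1 / d) ^ (k + 1)) ^ 2 * Real.exp (2 * B) with hC_def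
  apply (h0.const_mul C).mono'
  · exact ((continuous_pow (2 * n)).mul ((continuous_vk n k).pow 2)).aestronglyMeasurable
  · filter_upwards with t
    have hT2n : (0:ℝ) ≤ t ^ (2 * n) := by
      rw [pow_mul]; positivity
    rw [Real.norm_eq_abs, abs_of_nonneg (mul_nonneg hT2n (sq_nonneg _))]
    have h1 : vk n k t ^ 2 ≤ ((Real.exp 1 / d) ^ (k + 1)) ^ 2 *
        Real.exp (-B * t ^ (2 * n + 2)) ^ 2 := by
      rw [← mul_pow, ← sq_abs (vk n k t)]
      exact pow_le_pow_left₀ (abs_nonneg _) (vk_abs_le hn k hd hd1 t) 2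
    have h2 : Real.exp (-B * t ^ (2 * n + 2)) ^ 2 =
        Real.exp (-(2 * B) * t ^ (2 * n + 2)) := by
      rw [← Real.exp_nat_mul]
      congr 1
      push_cast
      ring
    have h3 : Real.exp (-(2 * B) * t ^ (2 * n + 2)) ≤
        Real.exp (2 * B) * Real.exp (-(2 * B) * t ^ 2) := by
      rw [← Real.exp_add, Real.exp_le_exp]
      have h4 := sq_le_pow_add_one (n := n) t
      nlinarith
    have hM2 : (0:ℝ) ≤ ((Real.exp 1 / d) ^ (k + 1)) ^ 2 := sq_nonneg _
    calc t ^ (2 * n) * vk n k t ^ 2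
        ≤ t ^ (2 * n) * (((Real.exp 1 / d) ^ (k + 1)) ^ 2 *
            Real.exp (-(2 * B) * t ^ (2 * n + 2))) := by
          apply mul_le_mul_of_nonneg_left _ hT2n
          rw [← h2]; exact h1
      _ ≤ t ^ (2 * n) * (((Real.exp 1 / d) ^ (k + 1)) ^ 2 *
            (Real.exp (2 * B) * Real.exp (-(2 * B) * t ^ 2))) := by
          apply mul_le_mul_of_nonneg_left _ hT2n
          exact mul_le_mul_of_nonneg_left h3 hM2
      _ = C * (t ^ (2 * n) * Real.exp (-(2 * B) * t ^ 2)) := by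
          rw [hC_def]; ring

lemma alg_helper (p e1 c2 : ℝ) (k n : ℕ) :
    (e1 / 2 * (p * e1) ^ k) ^ (2 * n + 1) / c2 * (e1 * (p ^ k / 2) ^ 2)
      = ((e1 / 2) ^ (2 * n + 1) * (e1 / 4) / c2) * ((p * e1) ^ (2 * n + 1) * p ^ 2) ^ k := by
  ring

lemma vk_norm_lower {n : ℕ} (hn : 0 < n) (k : ℕ) :
    ((Real.exp (-1) / 2) ^ (2 * n + 1) * (Real.exp (-1) / 4) / (2 * (n : ℝ) + 1)) *
      (((3/4 : ℝ) * Real.exp (-1)) ^ (2 * n + 1) * (3/4 : ℝ) ^ 2) ^ k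
    ≤ ∫ s : ℝ, s ^ (2 * n) * vk n k s ^ 2 := by
  have hn2 : (0:ℝ) < 2 * (n : ℝ) + 2 := by positivity
  have hn1 : (0:ℝ) < (n : ℝ) + 1 := by positivity
  have hn4 : (4:ℝ) ≤ 2 * (n : ℝ) + 2 := by
    have : (1:ℝ) ≤ (n : ℝ) := by exact_mod_cast hn
    linarith
  have ha : -(1/4 : ℝ) ≤ -(1 / (2 * (n : ℝ) + 2)) := by
    have h2 : 1 / (2 * (n : ℝ) + 2) ≤ 1 / 4 :=
      div_le_div_of_nonneg_left (by norm_num) (by norm_num) hn4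
    linarith
  have ha0 : -(1 / (2 * (n : ℝ) + 2)) ≤ 0 := by
    have : (0:ℝ) ≤ 1 / (2 * (n : ℝ) + 2) := by positivity
    linarith
  set e1 : ℝ := Real.exp (-1) with he1
  have he1p : (0:ℝ) < e1 := Real.exp_pos _
  set σ : ℝ := (3/4 : ℝ) ^ k * Real.exp (-((k : ℝ) + 1)) / 2 with hσdef
  have hσp : 0 < σ := by positivity
  have hq : (3/4 : ℝ) ^ k ≤ 1 := pow_le_one₀ (by norm_num) (by norm_num)
  have he : Real.exp (-((k : ℝ) + 1)) ≤ 1 := by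
    rw [Real.exp_le_one_iff]
    have : (0:ℝ) ≤ (k : ℝ) := Nat.cast_nonneg k
    linarith
  have hσ1 : σ ≤ 1 := by
    rw [hσdef]
    nlinarith [Real.exp_pos (-((k : ℝ) + 1)),
      pow_nonneg (show (0:ℝ) ≤ 3/4 by norm_num) k]
  set c : ℝ := e1 * ((3/4 : ℝ) ^ k / 2) ^ 2 with hc
  have hcp : 0 < c := by positivity
  have hpt : ∀ t ∈ Set.Ioc (0:ℝ) σ, t ^ (2 * n) * c ≤ t ^ (2 * n) * vk n k t ^ 2 := by
    intro t ht
    obtain ⟨ht0, htσ⟩ := ht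
    have hs0 : (0:ℝ) ≤ t ^ (2 * n + 2) / ((n : ℝ) + 1) := by
      apply div_nonneg (pow_nonneg ht0.le _) hn1.le
    have hsσ : t ^ (2 * n + 2) / ((n : ℝ) + 1) ≤ σ := by
      have h1 : t ^ (2 * n + 2) ≤ t :=
        pow_le_of_le_one ht0.le (le_trans htσ hσ1) (by omega)
      have h2 : t ^ (2 * n + 2) / ((n : ℝ) + 1) ≤ t ^ (2 * n + 2) := by
        apply div_le_self (pow_nonneg ht0.le _)
        have : (0:ℝ) ≤ (n : ℝ) := Nat.cast_nonneg n
        linarith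
      linarith
    have hL := laguerre_lower ha ha0 k hs0 (hsσ.trans_eq hσdef)
    have hvk : vk n k t ^ 2 = Real.exp (-(t ^ (2 * n + 2) / ((n : ℝ) + 1))) *
        laguerre (-(1 / (2 * (n : ℝ) + 2))) k (t ^ (2 * n + 2) / ((n : ℝ) + 1)) ^ 2 := by
      unfold vk
      rw [mul_pow, ← Real.exp_nat_mul]
      congr 2
      push_cast
      field_simp
    have hexp : e1 ≤ Real.exp (-(t ^ (2 * n + 2) / ((n : ℝ) + 1))) := by
      rw [he1, Real.exp_le_exp]
      have : t ^ (2 * n + 2) / ((n : ℝ) + 1) ≤ 1 := le_trans hsσ hσ1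
      linarith
    have hL2 : ((3/4 : ℝ) ^ k / 2) ^ 2 ≤
        laguerre (-(1 / (2 * (n : ℝ) + 2))) k (t ^ (2 * n + 2) / ((n : ℝ) + 1)) ^ 2 :=
      pow_le_pow_left₀ (by positivity) hL 2
    have hcle : c ≤ vk n k t ^ 2 := by
      rw [hvk, hc]
      exact mul_le_mul hexp hL2 (by positivity) (Real.exp_pos _).le
    exact mul_le_mul_of_nonneg_left hcle (pow_nonneg ht0.le _)
  have hint := vk_integrable hn k
  have hnonneg : ∀ t : ℝ, 0 ≤ t ^ (2 * n) * vk n k t ^ 2 := fun t =>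
    mul_nonneg (by rw [pow_mul]; positivity) (sq_nonneg _)
  have step1 : ∫ t in Set.Ioc (0:ℝ) σ, t ^ (2 * n) * vk n k t ^ 2
      ≤ ∫ t : ℝ, t ^ (2 * n) * vk n k t ^ 2 :=
    setIntegral_le_integral hint (Filter.Eventually.of_forall hnonneg)
  have step2 : ∫ t in Set.Ioc (0:ℝ) σ, t ^ (2 * n) * c
      ≤ ∫ t in Set.Ioc (0:ℝ) σ, t ^ (2 * n) * vk n k t ^ 2 :=
    setIntegral_mono_on (Continuous.integrableOn_Ioc (by fun_prop))
      hint.integrableOn measurableSet_Ioc hpt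
  have step3 : ∫ t in Set.Ioc (0:ℝ) σ, t ^ (2 * n) * c
      = σ ^ (2 * n + 1) / (2 * (n : ℝ) + 1) * c := by
    rw [← intervalIntegral.integral_of_le hσp.le, intervalIntegral.integral_mul_const,
      integral_pow]
    rw [zero_pow (by omega : 2 * n + 1 ≠ 0)]
    push_cast
    ring
  have hσeq : σ = e1 / 2 * ((3/4 : ℝ) * e1) ^ k := by
    rw [hσdef, he1, show -((k : ℝ) + 1) = ((k + 1 : ℕ) : ℝ) * (-1) by push_cast; ring,
      Real.exp_nat_mul]
    ring
  calc ((e1 / 2) ^ (2 * n + 1) * (e1 / 4) / (2 * (n : ℝ) + 1)) *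
        (((3/4 : ℝ) * e1) ^ (2 * n + 1) * (3/4 : ℝ) ^ 2) ^ k
      = σ ^ (2 * n + 1) / (2 * (n : ℝ) + 1) * c := by
        rw [hσeq, hc, alg_helper]
    _ ≤ ∫ t : ℝ, t ^ (2 * n) * vk n k t ^ 2 := by
        rw [← step3] at *
        linarith [step1, step2]
    _ = ∫ s : ℝ, s ^ (2 * n) * vk n k s ^ 2 := rfl

/-- Pointwise exponential decay of the normalized eigenfunctions:
for every `δ ∈ (0,1/2]` there is `C₀ > 0`, independent of `k`, with
`|v_k(t)| ≤ C₀^{k+1} e^{-B t^{2n+2}}`, `B = (1-2δ^{2(n+1)})/(2n+2)`. -/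
theorem stmt_7 (n : ℕ) (hn : 0 < n) (δ : ℝ) (hδ0 : 0 < δ) (hδ : δ ≤ 1 / 2) :
    ∃ C₀ : ℝ, 0 < C₀ ∧ ∀ k : ℕ, ∀ t : ℝ,
      |nvk n k t| ≤
        C₀ ^ (k + 1) *
          Real.exp (-((1 - 2 * δ ^ (2 * (n + 1))) / (2 * (n : ℝ) + 2)) * t ^ (2 * n + 2)) := by
  set d : ℝ := δ ^ (2 * (n + 1)) with hd_def
  have hd : 0 < d := by positivity
  have hd1 : d ≤ 1 := pow_le_one₀ hδ0.le (by linarith)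
  set e1 : ℝ := Real.exp (-1) with he1
  have he1p : (0:ℝ) < e1 := Real.exp_pos _
  set A : ℝ := (e1 / 2) ^ (2 * n + 1) * (e1 / 4) / (2 * (n : ℝ) + 1) with hA_def
  set Bk : ℝ := ((3/4 : ℝ) * e1) ^ (2 * n + 1) * (3/4 : ℝ) ^ 2 with hBk_def
  have hA : 0 < A := by positivity
  have hBk : 0 < Bk := by positivity
  set sm : ℝ := min 1 (min A Bk) with hsm_def
  have hsmp : 0 < sm := lt_min one_pos (lt_min hA hBk)
  set r : ℝ := Real.sqrt sm with hr_def
  have hr : 0 < r := Real.sqrt_pos.mpr hsmp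
  refine ⟨Real.exp 1 / d * r⁻¹, by positivity, ?_⟩
  intro k t
  have hN := vk_norm_lower hn k
  set N : ℝ := ∫ s : ℝ, s ^ (2 * n) * vk n k s ^ 2 with hNdef
  have hsmall : (r ^ (k + 1)) ^ 2 ≤ N := by
    have h1 : (r ^ (k + 1)) ^ 2 = sm ^ (k + 1) := by
      rw [← pow_mul, mul_comm (k+1) 2, pow_mul, Real.sq_sqrt hsmp.le]
    rw [h1]
    have h2 : sm ≤ A := le_trans (min_le_right _ _) (min_le_left _ _)
    have h3 : sm ^ k ≤ Bk ^ k :=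
      pow_le_pow_left₀ hsmp.le (le_trans (min_le_right _ _) (min_le_right _ _)) k
    calc sm ^ (k + 1) = sm * sm ^ k := by ring
      _ ≤ A * Bk ^ k := mul_le_mul h2 h3 (pow_nonneg hsmp.le k) hA.le
      _ ≤ N := hN
  have hsqrtN : r ^ (k + 1) ≤ Real.sqrt N := by
    have h4 := Real.sqrt_le_sqrt hsmall
    rwa [Real.sqrt_sq (pow_nonneg hr.le _)] at h4
  have hrk : (0:ℝ) < r ^ (k + 1) := pow_pos hr _
  have hvk := vk_abs_le hn k hd hd1 t
  unfold nvk
  rw [← hNdef, abs_div, abs_of_nonneg (Real.sqrt_nonneg _)]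
  calc |vk n k t| / Real.sqrt N
      ≤ ((Real.exp 1 / d) ^ (k + 1) *
          Real.exp (-((1 - 2 * d) / (2 * (n : ℝ) + 2)) * t ^ (2 * n + 2))) / r ^ (k + 1) :=
        div_le_div₀ (by positivity) hvk hrk hsqrtN
    _ = (Real.exp 1 / d * r⁻¹) ^ (k + 1) *
          Real.exp (-((1 - 2 * d) / (2 * (n : ℝ) + 2)) * t ^ (2 * n + 2)) := by
        rw [mul_pow, inv_pow]
        ring
end
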